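/- Fix an integer b ≥ 2 and define (x_m)_{m∈ℤ} in ℚ(x_1,x_2) by x_{m-1}x_{m+1} = x_m^b + 1. Then for every n ≥ 0, the cluster variable x_{n+3} is obtained from x_{-n} by the field automorphism of ℚ(x_1,x_2) interchanging x_1 and x_2; that is, x_{n+3}(x_1,x_2) = x_{-n}(x_2,x_1). -/

import Mathlib

noncomputable section

/-- The ambient field `ℚ(x₁, x₂)` of rational functions in two variables. -/
abbrev Kfield : Type := FractionRing (MvPolynomial (Fin 2) ℚ)

/-- The first indeterminate `x₁`. -/
def X1 : Kfield := algebraMap (MvPolynomial (Fin 2) ℚ) Kfield (MvPolynomial.X 0)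

/-- The second indeterminate `x₂`. -/
def X2 : Kfield := algebraMap (MvPolynomial (Fin 2) ℚ) Kfield (MvPolynomial.X 1)

/-- `X1` and `X2` are algebraically independent over `ℚ`. -/
lemma indep_X12 : AlgebraicIndependent ℚ ![X1, X2] := by
  have h := MvPolynomial.algebraicIndependent_X (Fin 2) ℚ
  have h2 := h.map' (f := IsScalarTower.toAlgHom ℚ (MvPolynomial (Fin 2) ℚ) Kfield)
    (IsFractionRing.injective _ _)
  have : (IsScalarTower.toAlgHom ℚ (MvPolynomial (Fin 2) ℚ) Kfield) ∘
      (MvPolynomial.X : Fin 2 → MvPolynomial (Fin 2) ℚ) = ![X1, X2] := by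
    funext i
    fin_cases i <;> rfl
  rwa [this] at h2

/-- Symmetry of algebraic independence for pairs. -/
lemma ind_symm {a c : Kfield} (h : AlgebraicIndependent ℚ ![a, c]) :
    AlgebraicIndependent ℚ ![c, a] := by
  have := h.comp (Equiv.swap (0 : Fin 2) 1) (Equiv.injective _)
  have he : (![a, c] ∘ (Equiv.swap (0 : Fin 2) 1)) = ![c, a] := by
    funext i
    fin_cases i <;> rfl
  rwa [he] at this

/-- Characterization of pair independence. -/
lemma ind_iff {a c : Kfield} (hc : Transcendental ℚ c) :
    AlgebraicIndependent ℚ ![a, c] ↔ Transcendental (Algebra.adjoin ℚ {c}) a := by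
  have hc1 : AlgebraicIndependent ℚ ![c] := by
    rw [algebraicIndependent_unique_type_iff]
    exact hc
  have hopt := hc1.option_iff_transcendental a
  have hr : Set.range ![c] = {c} := by
    rw [Set.range_unique]; rfl
  rw [hr] at hopt
  rw [← hopt]
  have he : ((fun o : Option (Fin 1) => o.elim a ![c]) ∘ (finSuccEquiv 1)) = ![a, c] := by
    funext i
    fin_cases i <;> rfl
  rw [← algebraicIndependent_equiv (finSuccEquiv 1)
    (f := fun o : Option (Fin 1) => o.elim a ![c]), he]

/-- If `a * c = s` with `s` a nonzero element of a subalgebra `S` and `c` algebraic over `S`,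
then `a` is algebraic over `S`. -/
lemma alg_of_mul {K : Type*} [Field K] [Algebra ℚ K] {S : Subalgebra ℚ K} {a c : K} {s : S}
    (hs0 : (s : K) ≠ 0) (h : a * c = (s : K)) (hc : IsAlgebraic S c) : IsAlgebraic S a := by
  have hc0 : c ≠ 0 := by
    rintro rfl
    rw [mul_zero] at h
    exact hs0 h.symm
  obtain ⟨p, hp, hpc⟩ := hc
  have : Invertible c := invertibleOfNonzero hc0
  have h1 : Polynomial.eval₂ (algebraMap S K) (⅟c) p.reverse = 0 :=
    (Polynomial.eval₂_reverse_eq_zero_iff _ _ _).2 (by rwa [Polynomial.aeval_def] at hpc)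
  refine ⟨p.reverse.scaleRoots s,
    Polynomial.scaleRoots_ne_zero (by simpa [Polynomial.reverse_eq_zero] using hp) s, ?_⟩
  have h2 := Polynomial.scaleRoots_aeval_eq_zero (p := p.reverse) (a := ⅟c) (r := s)
    (by rwa [Polynomial.aeval_def])
  have ha : a = (algebraMap S K) s * ⅟c := by
    rw [invOf_eq_inv]
    field_simp
    exact h
  rwa [← ha] at h2

/-- The key mutation step: if `![a, c]` are algebraically independent and
`a * c' = c ^ b + 1` with `b ≥ 1`, then `![c, c']` are algebraically independent. -/
lemma ind_step {b : ℕ} (hb : 1 ≤ b) {a c c' : Kfield}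
    (hm : AlgebraicIndependent ℚ ![a, c]) (hrel : a * c' = c ^ b + 1) :
    AlgebraicIndependent ℚ ![c, c'] := by
  have hc : Transcendental ℚ c := by
    have := hm.transcendental 1
    simpa using this
  have hcb : c ^ b + 1 ≠ 0 := by
    intro h0
    apply hc
    refine ⟨Polynomial.X ^ b + Polynomial.C 1, Polynomial.X_pow_add_C_ne_zero hb 1, ?_⟩
    simp [h0]
  have hs : c ^ b + 1 ∈ Algebra.adjoin ℚ ({c} : Set Kfield) := by
    have hcmem : c ∈ Algebra.adjoin ℚ ({c} : Set Kfield) :=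
      Algebra.self_mem_adjoin_singleton ℚ c
    exact add_mem (pow_mem hcmem b) (one_mem _)
  have hta : Transcendental (Algebra.adjoin ℚ ({c} : Set Kfield)) a := (ind_iff hc).1 hm
  apply ind_symm
  rw [ind_iff hc]
  intro halg
  exact hta (alg_of_mul (s := ⟨c ^ b + 1, hs⟩) hcb hrel halg)

/-- For `b ≥ 2` and the bi-infinite sequence `x_{m-1} x_{m+1} = x_m^b + 1`, any field
endomorphism of `ℚ(x₁,x₂)` interchanging `x₁` and `x₂` sends `x_{-n}` to `x_{n+3}`. -/
theorem stmt14 (b : ℕ) (hb : 2 ≤ b) (x : ℤ → Kfield) (h1 : x 1 = X1) (h2 : x 2 = X2)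
    (hrec : ∀ m : ℤ, x (m - 1) * x (m + 1) = x m ^ b + 1)
    (φ : Kfield →+* Kfield) (hφ1 : φ X1 = X2) (hφ2 : φ X2 = X1) :
    ∀ n : ℕ, φ (x (-(n : ℤ))) = x ((n : ℤ) + 3) := by
  have hb1 : 1 ≤ b := le_trans (by norm_num) hb
  -- all pairs of consecutive terms with positive index are algebraically independent
  have hind : ∀ n : ℕ, AlgebraicIndependent ℚ ![x ((n : ℤ) + 1), x ((n : ℤ) + 2)] := by
    intro n
    induction n with
    | zero => simpa [h1, h2] using indep_X12
    | succ k ih =>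
      have hr := hrec ((k : ℤ) + 2)
      have e1 : ((k : ℤ) + 2 - 1) = (k : ℤ) + 1 := by ring
      have e2 : ((k : ℤ) + 2 + 1) = (k : ℤ) + 3 := by ring
      rw [e1, e2] at hr
      have := ind_step hb1 ih hr
      have e3 : (((k : ℕ) + 1 : ℕ) : ℤ) + 1 = (k : ℤ) + 2 := by push_cast; ring
      have e4 : (((k : ℕ) + 1 : ℕ) : ℤ) + 2 = (k : ℤ) + 3 := by push_cast; ring
      rw [e3, e4]
      exact this
  have hxne : ∀ n : ℕ, x ((n : ℤ) + 1) ≠ 0 := fun n => by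
    have := (hind n).ne_zero 0
    simpa using this
  have hX1 : X1 ≠ 0 := by
    have := indep_X12.ne_zero 0
    simpa using this
  have hX2 : X2 ≠ 0 := by
    have := indep_X12.ne_zero 1
    simpa using this
  -- base case n = 0
  have base0 : φ (x 0) = x 3 := by
    have hr := hrec 1
    norm_num [h1, h2] at hr
    -- hr : x 0 * X2 = X1 ^ b + 1
    have hφr : φ (x 0) * X1 = X2 ^ b + 1 := by
      have := congrArg φ hr
      simpa [map_mul, map_pow, map_add, map_one, hφ1, hφ2] using this
    have hr2 := hrec 2
    norm_num [h1, h2] at hr2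
    -- hr2 : X1 * x 3 = X2 ^ b + 1
    apply mul_right_cancel₀ hX1
    rw [hφr, ← hr2]
    ring
  -- base case n = 1
  have base1 : φ (x (-1)) = x 4 := by
    have hr := hrec 0
    norm_num [h1] at hr
    -- hr : x (-1) * X1 = x 0 ^ b + 1
    have hφr : φ (x (-1)) * X2 = x 3 ^ b + 1 := by
      have := congrArg φ hr
      simpa [map_mul, map_pow, map_add, map_one, hφ1, base0] using this
    have hr3 := hrec 3
    norm_num at hr3
    -- hr3 : x 2 * x 4 = x 3 ^ b + 1
    rw [h2] at hr3
    apply mul_right_cancel₀ hX2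
    rw [hφr, ← hr3]
    ring
  -- two-step induction
  have key : ∀ n : ℕ, φ (x (-(n : ℤ))) = x ((n : ℤ) + 3) ∧
      φ (x (-((n : ℤ) + 1))) = x ((n : ℤ) + 4) := by
    intro n
    induction n with
    | zero =>
      constructor
      · simpa using base0
      · simpa using base1
    | succ k ih =>
      obtain ⟨ih1, ih2⟩ := ih
      constructor
      · have e : -(((k : ℕ) + 1 : ℕ) : ℤ) = -((k : ℤ) + 1) := by push_cast; ring
        have e' : (((k : ℕ) + 1 : ℕ) : ℤ) + 3 = (k : ℤ) + 4 := by push_cast; ring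
        rw [e, e', ih2]
      · -- goal : φ (x (-((k+1 : ℕ) + 1))) = x ((k+1 : ℕ) + 4)
        have hr := hrec (-((k : ℤ) + 1))
        have e1 : (-((k : ℤ) + 1) - 1) = -((k : ℤ) + 2) := by ring
        have e2 : (-((k : ℤ) + 1) + 1) = -(k : ℤ) := by ring
        rw [e1, e2] at hr
        -- hr : x (-(k+2)) * x (-k) = x (-(k+1)) ^ b + 1
        have hφr : φ (x (-((k : ℤ) + 2))) * x ((k : ℤ) + 3) = x ((k : ℤ) + 4) ^ b + 1 := by
          have := congrArg φ hr
          rw [map_mul, map_add, map_pow, map_one, ih1, ih2] at this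
          exact this
        have hr4 := hrec ((k : ℤ) + 4)
        have e3 : ((k : ℤ) + 4 - 1) = (k : ℤ) + 3 := by ring
        have e4 : ((k : ℤ) + 4 + 1) = (k : ℤ) + 5 := by ring
        rw [e3, e4] at hr4
        -- hr4 : x (k+3) * x (k+5) = x (k+4) ^ b + 1
        have hne : x ((k : ℤ) + 3) ≠ 0 := by
          have := hxne (k + 2)
          have e5 : (((k : ℕ) + 2 : ℕ) : ℤ) + 1 = (k : ℤ) + 3 := by push_cast; ring
          rwa [e5] at this
        have hcancel : φ (x (-((k : ℤ) + 2))) = x ((k : ℤ) + 5) := by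
          apply mul_right_cancel₀ hne
          rw [hφr, ← hr4]
          ring
        have e6 : -(((k : ℕ) + 1 : ℕ) : ℤ) - 1 = -((k : ℤ) + 2) := by push_cast; ring
        have e7 : (((k : ℕ) + 1 : ℕ) : ℤ) + 4 = (k : ℤ) + 5 := by push_cast; ring
        have e8 : -((((k : ℕ) + 1 : ℕ) : ℤ) + 1) = -((k : ℤ) + 2) := by push_cast; ring
        rw [e8, e7, hcancel]
  exact fun n => (key n).1
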